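/- Let G be a subgroup of the Paige loop over F₂ isomorphic to S₃, and let x = [[1,α],[β,1]], y = [[1,γ],[δ,1]] be two distinct involutions in G with diagonal entries equal to 1. Then the third involution xyx of G has diagonal entries equal to 0, i.e., has the form [[0,ε],[φ,0]]. -/

import Mathlib

/-- Zorn vector matrices over the field with two elements. -/
structure Zorn2 where
  a : ZMod 2
  alpha : Fin 3 → ZMod 2
  beta : Fin 3 → ZMod 2
  b : ZMod 2

namespace Zorn2

/-- Standard dot product on `F₂³`. -/
def zdot (u v : Fin 3 → ZMod 2) : ZMod 2 := u 0 * v 0 + u 1 * v 1 + u 2 * v 2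

/-- Standard cross product on `F₂³`. -/
def zcross (u v : Fin 3 → ZMod 2) : Fin 3 → ZMod 2 :=
  ![u 1 * v 2 - u 2 * v 1, u 2 * v 0 - u 0 * v 2, u 0 * v 1 - u 1 * v 0]

/-- Zorn's vector matrix multiplication. -/
instance : Mul Zorn2 :=
  ⟨fun x y =>
    { a := x.a * y.a + zdot x.alpha y.beta
      alpha := fun i => x.a * y.alpha i + x.alpha i * y.b - zcross x.beta y.beta i
      beta := fun i => x.beta i * y.a + x.b * y.beta i + zcross x.alpha y.alpha i
      b := zdot x.beta y.alpha + x.b * y.b }⟩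

instance : One Zorn2 := ⟨{ a := 1, alpha := fun _ => 0, beta := fun _ => 0, b := 1 }⟩

instance : Add Zorn2 :=
  ⟨fun x y => { a := x.a + y.a, alpha := x.alpha + y.alpha,
                beta := x.beta + y.beta, b := x.b + y.b }⟩

/-- Determinant (norm) of a Zorn vector matrix. -/
def det (x : Zorn2) : ZMod 2 := x.a * x.b - zdot x.alpha x.beta

/-- `x` has multiplicative order 2. -/
def ord2 (x : Zorn2) : Prop := x * x = 1 ∧ x ≠ 1

/-- `x` has multiplicative order 3. -/
def ord3 (x : Zorn2) : Prop := x * (x * x) = 1 ∧ x * x ≠ 1 ∧ x ≠ 1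

end Zorn2

/-! Over `F₂` every Zorn matrix `z` satisfies `z * z = trace z • z + det z`, so a determinant-one
element of trace `0` squares to `1`. The product `x * y` of two distinct involutions of the copy
of `S₃` has order `3` and determinant `1`, hence trace `1`. When `x` and `y` have unit diagonal and
`det x = 1`, both diagonal entries of `(x * y) * x` equal `trace (x * y) + 1 = 0`. -/

attribute [ext] Zorn2

lemma Equiv.Perm.fin_three_mul_of_ne_involutions {g h : Equiv.Perm (Fin 3)} (hg : g * g = 1)
    (hh : h * h = 1) (hg1 : g ≠ 1) (hh1 : h ≠ 1) (hgh : g ≠ h) :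
    g * h * (g * h * (g * h)) = 1 ∧ g * h * (g * h) ≠ 1 ∧ g * h ≠ 1 := by
  revert g h
  decide

lemma mul_self_eq_one_of_map_mul_self {G M : Type*} [Group G] [Mul M] [One M] {e : G → M}
    (h11 : (1 : M) * 1 = 1) (hinj : Function.Injective e) (hmul : ∀ g h, e (g * h) = e g * e h)
    {g : G} (hg : e g * e g = 1) : g * g = 1 :=
  mul_eq_left.mp <| hinj <| by rw [hmul, hmul, hg, h11]

namespace Zorn2

section Projections

variable (x y : Zorn2)

@[simp] lemma mul_a : (x * y).a = x.a * y.a + zdot x.alpha y.beta := rfl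
@[simp] lemma mul_alpha (i : Fin 3) :
    (x * y).alpha i = x.a * y.alpha i + x.alpha i * y.b - zcross x.beta y.beta i := rfl
@[simp] lemma mul_beta (i : Fin 3) :
    (x * y).beta i = x.beta i * y.a + x.b * y.beta i + zcross x.alpha y.alpha i := rfl
@[simp] lemma mul_b : (x * y).b = zdot x.beta y.alpha + x.b * y.b := rfl
@[simp] lemma one_a : (1 : Zorn2).a = 1 := rfl
@[simp] lemma one_alpha : (1 : Zorn2).alpha = 0 := rfl
@[simp] lemma one_beta : (1 : Zorn2).beta = 0 := rfl
@[simp] lemma one_b : (1 : Zorn2).b = 1 := rfl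

end Projections

def trace (x : Zorn2) : ZMod 2 := x.a + x.b

lemma one_mul_one : (1 : Zorn2) * 1 = 1 := by
  ext i <;> simp [zdot, zcross] <;> fin_cases i <;> rfl

lemma mul_self_eq_one_of_trace_eq_zero {x : Zorn2} (ht : x.trace = 0) (hn : x.det = 1) :
    x * x = 1 := by
  have hb : x.b = x.a := by grind [trace]
  unfold det zdot at hn
  ext i
  · simp only [mul_a, one_a, zdot]
    grind
  · fin_cases i <;> simp [zcross, hb] <;> grind
  · fin_cases i <;> simp [zcross, hb] <;> grind
  · simp only [mul_b, one_b, zdot]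
    grind

lemma trace_eq_one_of_ord3 {x : Zorn2} (hn : x.det = 1) (hx : x.ord3) : x.trace = 1 := by
  rcases (by decide : ∀ t : ZMod 2, t = 0 ∨ t = 1) x.trace with ht | ht
  · exact absurd (mul_self_eq_one_of_trace_eq_zero ht hn) hx.2.1
  · exact ht

lemma ord3_mul_of_ord2 {e : Equiv.Perm (Fin 3) → Zorn2} (hinj : Function.Injective e)
    (hmul : ∀ g h, e (g * h) = e g * e h) {x y : Zorn2} (hx : x ∈ Set.range e)
    (hy : y ∈ Set.range e) (hxy : x ≠ y) (hx2 : x.ord2) (hy2 : y.ord2) : (x * y).ord3 := by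
  obtain ⟨g, rfl⟩ := hx
  obtain ⟨h, rfl⟩ := hy
  have hg := mul_self_eq_one_of_map_mul_self one_mul_one hinj hmul hx2.1
  have hh := mul_self_eq_one_of_map_mul_self one_mul_one hinj hmul hy2.1
  have he1 : e 1 = 1 := by rw [← hg, hmul, hx2.1]
  have hg1 : g ≠ 1 := by rintro rfl; exact hx2.2 he1
  have hh1 : h ≠ 1 := by rintro rfl; exact hy2.2 he1
  have hgh : g ≠ h := by rintro rfl; exact hxy rfl
  obtain ⟨h3, h2, h1⟩ := Equiv.Perm.fin_three_mul_of_ne_involutions hg hh hg1 hh1 hgh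
  simp only [ord3, ← hmul, ← he1, hinj.ne_iff]
  exact ⟨congrArg e h3, h2, h1⟩

lemma mul_mul_a_eq_trace_add_one {x y : Zorn2} (hxa : x.a = 1) (hxb : x.b = 1) (hya : y.a = 1)
    (hyb : y.b = 1) (hx : x.det = 1) : ((x * y) * x).a = (x * y).trace + 1 := by
  have hαβ : zdot x.alpha x.beta = 0 := by simpa [det, hxa, hxb] using hx
  simp only [trace, mul_a, mul_alpha, mul_b, zdot, zcross, Matrix.cons_val, hxa, hxb, hya, hyb]
    at hαβ ⊢
  grind

lemma mul_mul_b_eq_trace_add_one {x y : Zorn2} (hxa : x.a = 1) (hxb : x.b = 1) (hya : y.a = 1)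
    (hyb : y.b = 1) (hx : x.det = 1) : ((x * y) * x).b = (x * y).trace + 1 := by
  have hαβ : zdot x.alpha x.beta = 0 := by simpa [det, hxa, hxb] using hx
  simp only [trace, mul_a, mul_beta, mul_b, zdot, zcross, Matrix.cons_val, hxa, hxb, hya, hyb]
    at hαβ ⊢
  grind

end Zorn2

open Zorn2 in
/-- In a subgroup of the Paige loop over `F₂` isomorphic to `S₃` (realized as a
multiplication-preserving injection of `S₃` into the determinant-one elements),
if `x`, `y` are distinct involutions with diagonal entries `1`, then the third
involution `xyx` has diagonal entries `0`. -/
theorem stmt10 (e : Equiv.Perm (Fin 3) → Zorn2)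
    (hinj : Function.Injective e)
    (hmul : ∀ g h : Equiv.Perm (Fin 3), e (g * h) = e g * e h)
    (hdet : ∀ g : Equiv.Perm (Fin 3), Zorn2.det (e g) = 1)
    (x y : Zorn2) (hx : x ∈ Set.range e) (hy : y ∈ Set.range e) (hxy : x ≠ y)
    (hx2 : Zorn2.ord2 x) (hy2 : Zorn2.ord2 y)
    (hxa : x.a = 1) (hxb : x.b = 1) (hya : y.a = 1) (hyb : y.b = 1) :
    ((x * y) * x).a = 0 ∧ ((x * y) * x).b = 0 := by
  have hord3 := ord3_mul_of_ord2 hinj hmul hx hy hxy hx2 hy2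
  obtain ⟨g, rfl⟩ := hx
  obtain ⟨h, rfl⟩ := hy
  have htr : (e g * e h).trace = 1 := trace_eq_one_of_ord3 (hmul g h ▸ hdet (g * h)) hord3
  rw [mul_mul_a_eq_trace_add_one hxa hxb hya hyb (hdet g),
    mul_mul_b_eq_trace_add_one hxa hxb hya hyb (hdet g), htr]
  exact ⟨rfl, rfl⟩
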